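/- arXiv:2604.15238 — 2 statements merged into one kernel-verified Lean document; each statement's English description precedes it below -/
import Mathlib

section
/- Contractivity of the discrete-time firing-rate neural network with MONE activation. Let W ∈ ℝ^{n×n}, B ∈ ℝ^{n×m}, u ∈ ℝᵐ, let Ψ : ℝⁿ → ℝⁿ be a diagonal MONE map, let P ∈ ℝ^{n×n} be symmetric positive definite, Q ∈ ℝ^{n×n} diagonal positive definite, and ρ ∈ [0,1). If the 2n×2n block matrix [[−ρ²P, WᵀQ],[QW, P − 2Q]] is negative semidefinite, then the map T(x) = Ψ(Wx + Bu) satisfies (T(x) − T(x̃))ᵀ P (T(x) − T(x̃)) ≤ ρ² (x − x̃)ᵀ P (x − x̃) for all x, x̃ ∈ ℝⁿ; i.e., the discrete-time firing-rate dynamics x⁺ = Ψ(Wx + Bu) are strongly contracting with factor ρ in ‖·‖_P. -/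
/-!
Write `dx = x - x̃` and `dy = T x - T x̃`. Componentwise, `dyᵢ` is an increment of a function with
slope in `[0, 1]` over the increment `(W dx)ᵢ`, so `dyᵢ² ≤ dyᵢ (W dx)ᵢ`; weighting by the nonnegative
diagonal of `Q` gives `dyᵀ Q (W dx - dy) ≥ 0`. Evaluating the negative semidefinite block matrix at
`(dx, dy)` gives `dyᵀ P dy - ρ² dxᵀ P dx + 2 dyᵀ Q (W dx - dy) ≤ 0`, whence the contraction estimate.
-/

open Matrix

def SlopeRestricted (k₁ k₂ : ℝ) (f : ℝ → ℝ) : Prop :=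
  ∀ s t, k₁ * (s - t) ^ 2 ≤ (f s - f t) * (s - t) ∧ (f s - f t) * (s - t) ≤ k₂ * (s - t) ^ 2

theorem SlopeRestricted.sq_sub_le {k : ℝ} {f : ℝ → ℝ} (hf : SlopeRestricted 0 k f) (s t : ℝ) :
    (f s - f t) ^ 2 ≤ k * ((f s - f t) * (s - t)) := by
  obtain ⟨hlo, hhi⟩ := hf s t
  rcases eq_or_ne s t with rfl | hst
  · simp
  · have hpos : 0 < (s - t) ^ 2 := by positivity [sub_ne_zero.mpr hst]
    -- the slope `(f s - f t) / (s - t)` lies in `[0, k]`; clear the denominator `(s - t) ^ 2`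
    nlinarith [mul_nonneg (zero_mul ((s - t) ^ 2) ▸ hlo) (sub_nonneg.mpr hhi)]

theorem dotProduct_mulVec_nonneg_of_isDiag {ι : Type*} [Fintype ι] {Q : Matrix ι ι ℝ}
    (hQ : Q.IsDiag) (hQ0 : ∀ i, 0 ≤ Q i i) {v w : ι → ℝ} (hvw : ∀ i, 0 ≤ v i * w i) :
    0 ≤ v ⬝ᵥ Q *ᵥ w := by
  classical
  rw [← hQ.diagonal_diag]
  exact Finset.sum_nonneg fun i _ => by
    rw [mulVec_diagonal, diag_apply, mul_left_comm]
    exact mul_nonneg (hQ0 i) (hvw i)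

theorem sumElim_dotProduct_fromBlocks_transpose_mulVec {ι κ : Type*} [Fintype ι] [Fintype κ]
    {R : Type*} [CommRing R] (A : Matrix ι ι R) (C : Matrix κ ι R) (D : Matrix κ κ R)
    (x : ι → R) (y : κ → R) :
    Sum.elim x y ⬝ᵥ fromBlocks A Cᵀ C D *ᵥ Sum.elim x y =
      x ⬝ᵥ A *ᵥ x + 2 * (y ⬝ᵥ C *ᵥ x) + y ⬝ᵥ D *ᵥ y := by
  have hCt : x ⬝ᵥ Cᵀ *ᵥ y = y ⬝ᵥ C *ᵥ x := by
    rw [dotProduct_mulVec, vecMul_transpose, dotProduct_comm]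
  rw [fromBlocks_mulVec, sumElim_dotProduct_sumElim]
  simp only [Sum.elim_comp_inl, Sum.elim_comp_inr, dotProduct_add, hCt]
  ring

theorem dotProduct_mulVec_sub_nonneg_of_slopeRestricted {ι : Type*} [Fintype ι]
    {Ψ : (ι → ℝ) → ι → ℝ} {ψ : ι → ℝ → ℝ} (hdiag : ∀ x i, Ψ x i = ψ i (x i))
    (hψ : ∀ i, SlopeRestricted 0 1 (ψ i)) {Q : Matrix ι ι ℝ} (hQ : Q.IsDiag)
    (hQ0 : ∀ i, 0 ≤ Q i i) (a b : ι → ℝ) :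
    0 ≤ (Ψ a - Ψ b) ⬝ᵥ Q *ᵥ (a - b - (Ψ a - Ψ b)) := by
  refine dotProduct_mulVec_nonneg_of_isDiag hQ hQ0 fun i => ?_
  have := (hψ i).sq_sub_le (a i) (b i)
  simp only [Pi.sub_apply, hdiag]
  nlinarith

theorem frnn_disc_mone_contraction_general
    {n m : ℕ}
    (W : Matrix (Fin n) (Fin n) ℝ) (B : Matrix (Fin n) (Fin m) ℝ) (u : Fin m → ℝ)
    (Ψ : (Fin n → ℝ) → (Fin n → ℝ)) (ψ : Fin n → ℝ → ℝ)
    (hdiag : ∀ (x : Fin n → ℝ) (i : Fin n), Ψ x i = ψ i (x i))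
    (hslope : ∀ (i : Fin n) (s t : ℝ),
      0 * (s - t)^2 ≤ (ψ i s - ψ i t) * (s - t) ∧ (ψ i s - ψ i t) * (s - t) ≤ 1 * (s - t)^2)
    (P Q : Matrix (Fin n) (Fin n) ℝ)
    (hQd : Q.IsDiag) (hQ : Q.PosDef)
    (ρ : ℝ)
    (hLMI : (-(fromBlocks ((-(ρ^2)) • P) (Wᵀ * Q) (Q * W)
        (P - (2 : ℝ) • Q))).PosSemidef) :
    ∀ x xt : Fin n → ℝ,
      (Ψ (W *ᵥ x + B *ᵥ u) - Ψ (W *ᵥ xt + B *ᵥ u)) ⬝ᵥ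
          P *ᵥ (Ψ (W *ᵥ x + B *ᵥ u) - Ψ (W *ᵥ xt + B *ᵥ u)) ≤
        ρ^2 * ((x - xt) ⬝ᵥ P *ᵥ (x - xt)) := by
  intro x xt
  set a := W *ᵥ x + B *ᵥ u
  set b := W *ᵥ xt + B *ᵥ u
  have hab : W *ᵥ (x - xt) = a - b := by simp only [a, b, mulVec_sub]; abel
  have hincr := dotProduct_mulVec_sub_nonneg_of_slopeRestricted hdiag hslope hQd
    (fun _ => hQ.posSemidef.diag_nonneg) a b
  have hLMI_at := hLMI.dotProduct_mulVec_nonneg (Sum.elim (x - xt) (Ψ a - Ψ b))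
  have hWQ : Wᵀ * Q = (Q * W)ᵀ := by rw [transpose_mul, hQd.isSymm.eq]
  rw [star_trivial, neg_mulVec, dotProduct_neg, hWQ,
    sumElim_dotProduct_fromBlocks_transpose_mulVec, ← mulVec_mulVec, hab] at hLMI_at
  simp only [smul_mulVec, sub_mulVec, dotProduct_smul, dotProduct_sub, smul_eq_mul] at hLMI_at
  rw [mulVec_sub, dotProduct_sub] at hincr
  linarith

/-- Contractivity of the discrete-time firing-rate neural network with MONE activation. -/
theorem frnn_disc_mone_contraction
    {n m : ℕ}
    (W : Matrix (Fin n) (Fin n) ℝ) (B : Matrix (Fin n) (Fin m) ℝ) (u : Fin m → ℝ)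
    (Ψ : (Fin n → ℝ) → (Fin n → ℝ)) (ψ : Fin n → ℝ → ℝ)
    (hdiag : ∀ (x : Fin n → ℝ) (i : Fin n), Ψ x i = ψ i (x i))
    (hslope : ∀ (i : Fin n) (s t : ℝ),
      0 * (s - t)^2 ≤ (ψ i s - ψ i t) * (s - t) ∧ (ψ i s - ψ i t) * (s - t) ≤ 1 * (s - t)^2)
    (P Q : Matrix (Fin n) (Fin n) ℝ)
    (hPs : P.IsSymm) (hP : P.PosDef) (hQd : Q.IsDiag) (hQ : Q.PosDef)
    (ρ : ℝ) (hρ0 : 0 ≤ ρ) (hρ1 : ρ < 1)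
    (hLMI : (-(fromBlocks ((-(ρ^2)) • P) (Wᵀ * Q) (Q * W)
        (P - (2 : ℝ) • Q))).PosSemidef) :
    ∀ x xt : Fin n → ℝ,
      (Ψ (W *ᵥ x + B *ᵥ u) - Ψ (W *ᵥ xt + B *ᵥ u)) ⬝ᵥ
          P *ᵥ (Ψ (W *ᵥ x + B *ᵥ u) - Ψ (W *ᵥ xt + B *ᵥ u)) ≤
        ρ^2 * ((x - xt) ⬝ᵥ P *ᵥ (x - xt)) :=
  frnn_disc_mone_contraction_general W B u Ψ ψ hdiag hslope P Q hQd hQ ρ hLMI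
end

section
/- Exact unconstrained parameterization of the firing-rate MONE certificate. Fix c ∈ [0,1] and W ∈ ℝ^{n×n}. The following are equivalent: (i) there exist a symmetric positive definite P ∈ ℝ^{n×n} and a diagonal positive definite Q ∈ ℝ^{n×n} such that [[−2(1−c)P, P + WᵀQ],[P + QW, −2Q]] ⪯ 0; (ii) there exist a matrix S ∈ ℝ^{n×n} with SᵀS ⪯ Iₙ, an invertible matrix V ∈ ℝ^{n×n}, and a vector d ∈ ℝⁿ such that W = 2√(1−c) · diag(e^{d₁},…,e^{dₙ}) · S · (VᵀV) − diag(e^{2d₁},…,e^{2dₙ}) · (VᵀV)², where diag(a₁,…,aₙ) denotes the diagonal matrix with the given entries. -/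
/-!
Every positive definite `P` is `(VᵀV)²` with `V = P^{1/4}`, and every positive diagonal `Q` is
`diag(e^{-2d})`. With `D = diag(e^d)`, `M = VᵀV`, `X = P + QW` and `r = 2√(1−c)`, the Schur
complement of the `−2Q` block turns the certificate into `(DX)ᵀ(DX) ⪯ r² MᵀM`, because
`(2Q)⁻¹ = DᵀD / 2`. As `M` is invertible, this holds iff `DX = r S M` for a contraction `S`
(take `S = r⁻¹ DX M⁻¹`, or `S = 0` when `r = 0`, which forces `DX = 0`), and solving
`DX = r S M` for `W` gives the parameterization.
-/

open Matrix Real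
open scoped ComplexOrder

namespace Matrix

variable {m 𝕜 : Type*} [RCLike 𝕜]

theorem posSemidef_smul_iff {a : ℝ} (ha : 0 < a) {A : Matrix m m 𝕜} :
    (a • A).PosSemidef ↔ A.PosSemidef :=
  ⟨fun h => by simpa [smul_smul, ha.ne'] using h.smul (inv_nonneg.2 ha.le), fun h => h.smul ha.le⟩

theorem IsDiag.exists_eq_diagonal_exp [DecidableEq m] {Q : Matrix m m ℝ} (hQ : Q.IsDiag)
    (hQpos : Q.PosDef) :
    ∃ d : m → ℝ, Q = diagonal (fun i => exp (-2 * d i)) := by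
  refine ⟨fun i => -log (Q i i) / 2, ?_⟩
  conv_lhs => rw [← hQ.diagonal_diag]
  congr 1
  funext i
  rw [show -2 * (-log (Q i i) / 2) = log (Q i i) by ring, exp_log hQpos.diag_pos, diag_apply]

variable [Fintype m]

theorem eq_zero_of_posSemidef_neg_conjTranspose_mul_self {k : Type*} [Fintype k]
    {Y : Matrix k m 𝕜} (h : (-(Yᴴ * Y)).PosSemidef) : Y = 0 := by
  open scoped MatrixOrder in
  have : Yᴴ * Y ≤ 0 := by simpa [le_iff] using h
  rw [← conjTranspose_mul_self_eq_zero]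
  exact le_antisymm this (posSemidef_conjTranspose_mul_self Y).nonneg

variable [DecidableEq m]

theorem sq_smul_conjTranspose_mul_self_sub_smul_mul (r : ℝ) (S M : Matrix m m 𝕜) :
    r ^ 2 • (Mᴴ * M) - (r • (S * M))ᴴ * (r • (S * M)) = r ^ 2 • (Mᴴ * (1 - Sᴴ * S) * M) := by
  simp only [conjTranspose_smul, conjTranspose_mul, star_trivial, smul_mul_smul, Matrix.mul_sub,
    Matrix.sub_mul, Matrix.mul_one, smul_sub, Matrix.mul_assoc, sq]

theorem posSemidef_sq_smul_sub_iff_exists_contraction {r : ℝ} (hr : 0 ≤ r) {M : Matrix m m 𝕜}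
    (hM : IsUnit M) (Y : Matrix m m 𝕜) :
    (r ^ 2 • (Mᴴ * M) - Yᴴ * Y).PosSemidef ↔
      ∃ S : Matrix m m 𝕜, (1 - Sᴴ * S).PosSemidef ∧ Y = r • (S * M) := by
  constructor
  · intro h
    rcases hr.eq_or_lt with rfl | hr
    · refine ⟨0, by simpa using PosSemidef.one, ?_⟩
      simpa using eq_zero_of_posSemidef_neg_conjTranspose_mul_self (by simpa using h)
    · set S := r⁻¹ • (Y * M⁻¹)
      have hY : Y = r • (S * M) := by
        simp [S, smul_smul, hr.ne', Matrix.mul_assoc,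
          nonsing_inv_mul _ ((isUnit_iff_isUnit_det M).1 hM)]
      refine ⟨S, ?_, hY⟩
      rw [hY, sq_smul_conjTranspose_mul_self_sub_smul_mul, posSemidef_smul_iff (by positivity)]
        at h
      rwa [← hM.posSemidef_star_left_conjugate_iff, star_eq_conjTranspose]
  · rintro ⟨S, hS, rfl⟩
    rw [sq_smul_conjTranspose_mul_self_sub_smul_mul]
    exact (hS.conjTranspose_mul_mul_same M).smul (sq_nonneg r)

open scoped MatrixOrder in
theorem PosDef.exists_eq_sq_conjTranspose_mul_self {P : Matrix m m 𝕜} (hP : P.PosDef) :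
    ∃ V : Matrix m m 𝕜, IsUnit V ∧ P = (Vᴴ * V) ^ 2 := by
  have hM := CFC.sqrt_nonneg P
  have hV := CFC.sqrt_nonneg (CFC.sqrt P)
  refine ⟨CFC.sqrt (CFC.sqrt P), ?_, ?_⟩
  · rw [CFC.isUnit_sqrt_iff _ hM, CFC.isUnit_sqrt_iff _ hP.posSemidef.nonneg]
    exact hP.isUnit
  · rw [hV.posSemidef.isHermitian.eq, CFC.sqrt_mul_sqrt_self _ hM, sq,
      CFC.sqrt_mul_sqrt_self _ hP.posSemidef.nonneg]

theorem posDef_sq_conjTranspose_mul_self {V : Matrix m m 𝕜} (hV : IsUnit V) :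
    ((Vᴴ * V) ^ 2).PosDef :=
  ((posSemidef_conjTranspose_mul_self V).pow 2).posDef_iff_isUnit.2 ((hV.star.mul hV).pow 2)

theorem diagonal_exp_mul_diagonal_exp (a b : m → ℝ) :
    diagonal (fun i => exp (a i)) * diagonal (fun i => exp (b i)) =
      diagonal (fun i => exp (a i + b i)) := by
  simp [diagonal_mul_diagonal, exp_add]

end Matrix

theorem eq_mul_sub_mul_mul_iff {R : Type*} [Ring R] {D E : R} (hDE : D * E = 1) (hED : E * D = 1)
    (W T P : R) : W = D * T - D * D * P ↔ D * (P + E * E * W) = T := by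
  constructor
  · rintro rfl
    simp only [mul_add, mul_sub, ← mul_assoc, hDE, one_mul, hED]
    abel
  · rintro rfl
    simp only [mul_add, ← mul_assoc, hDE, one_mul]
    abel

section FiringRate

variable {m : Type*} [Fintype m] [DecidableEq m]

def firingRateLMI (c : ℝ) (W P Q : Matrix m m ℝ) : Matrix (m ⊕ m) (m ⊕ m) ℝ :=
  -fromBlocks ((-(2 * (1 - c))) • P) (P + Wᵀ * Q) (P + Q * W) ((-2 : ℝ) • Q)

theorem posSemidef_firingRateLMI_iff (c : ℝ) (W : Matrix m m ℝ) {P Q D : Matrix m m ℝ}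
    (hP : Pᵀ = P) (hQ : Q.PosDef) (hD : Dᵀ = D) (hQD : Q * (D * D) = 1) :
    (firingRateLMI c W P Q).PosSemidef ↔
      ((4 * (1 - c)) • P - (D * (P + Q * W))ᵀ * (D * (P + Q * W))).PosSemidef := by
  have hQs : Qᵀ = Q := by simpa using hQ.isHermitian.eq
  have h2Q : ((2 : ℝ) • Q).PosDef := hQ.smul two_pos
  have := h2Q.isUnit.invertible
  have hinv : ((2 : ℝ) • Q)⁻¹ = (2⁻¹ : ℝ) • (D * D) :=
    inv_eq_right_inv (by rw [smul_mul_smul, hQD]; norm_num)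
  have hLMI : firingRateLMI c W P Q =
      fromBlocks ((2 * (1 - c)) • P) (-(P + Q * W))ᵀ (-(P + Q * W))ᵀᴴ ((2 : ℝ) • Q) := by
    simp [firingRateLMI, fromBlocks_neg, transpose_mul, hP, hQs]
  rw [hLMI, PosDef.fromBlocks₂₂ _ _ h2Q, hinv, ← posSemidef_smul_iff (two_pos : (0 : ℝ) < 2)]
  congr! 1
  simp only [transpose_mul, transpose_add, hP, hQs, hD, conjTranspose_eq_transpose_of_trivial,
    transpose_transpose, transpose_neg, Matrix.mul_smul, Matrix.smul_mul, Matrix.neg_mul,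
    Matrix.mul_neg, Matrix.mul_assoc]
  module

theorem eq_sub_diagonal_exp_iff (r : ℝ) (d : m → ℝ) (S M W : Matrix m m ℝ) :
    W = r • (diagonal (fun i => exp (d i)) * S * M) - diagonal (fun i => exp (2 * d i)) * M ^ 2 ↔
      diagonal (fun i => exp (d i)) * (M ^ 2 + diagonal (fun i => exp (-2 * d i)) * W) =
        r • (S * M) := by
  have hDE := diagonal_exp_mul_diagonal_exp d (-d)
  have hED := diagonal_exp_mul_diagonal_exp (-d) d
  simp only [Pi.neg_apply, add_neg_cancel, neg_add_cancel, exp_zero, diagonal_one] at hDE hED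
  rw [show (fun i => exp (2 * d i)) = fun i => exp (d i + d i) by simp [two_mul],
    show (fun i => exp (-2 * d i)) = fun i => exp (-d i + -d i) by simp [two_mul],
    ← diagonal_exp_mul_diagonal_exp, ← diagonal_exp_mul_diagonal_exp, Matrix.mul_assoc,
    ← Matrix.mul_smul]
  exact eq_mul_sub_mul_mul_iff hDE hED _ _ _

theorem posSemidef_firingRateLMI_iff_exists_contraction {c : ℝ} (hc : c ≤ 1) (W : Matrix m m ℝ)
    {M : Matrix m m ℝ} (hMs : Mᵀ = M) (hM : IsUnit M) (d : m → ℝ) :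
    (firingRateLMI c W (M ^ 2) (diagonal fun i => exp (-2 * d i))).PosSemidef ↔
      ∃ S : Matrix m m ℝ, (1 - Sᵀ * S).PosSemidef ∧
        W = (2 * √(1 - c)) • (diagonal (fun i => exp (d i)) * S * M) -
          diagonal (fun i => exp (2 * d i)) * M ^ 2 := by
  have hQD : diagonal (fun i => exp (-2 * d i)) *
      (diagonal (fun i => exp (d i)) * diagonal (fun i => exp (d i))) = 1 := by
    rw [diagonal_exp_mul_diagonal_exp, diagonal_exp_mul_diagonal_exp, ← diagonal_one]
    congr 1
    funext i
    rw [show -2 * d i + (d i + d i) = 0 by ring, exp_zero]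
  have hr : (4 * (1 - c)) • M ^ 2 = (2 * √(1 - c)) ^ 2 • (Mᴴ * M) := by
    rw [mul_pow, sq_sqrt (by linarith), conjTranspose_eq_transpose_of_trivial, hMs, sq M]
    norm_num
  rw [posSemidef_firingRateLMI_iff c W (by rw [sq, transpose_mul, hMs])
    (posDef_diagonal_iff.2 fun i => exp_pos _) (diagonal_transpose _) hQD, hr,
    ← conjTranspose_eq_transpose_of_trivial,
    posSemidef_sq_smul_sub_iff_exists_contraction (by positivity) hM]
  simp only [eq_sub_diagonal_exp_iff, conjTranspose_eq_transpose_of_trivial]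

end FiringRate

theorem frnn_mone_parameterization_general
    {n : ℕ} (c : ℝ) (hc1 : c ≤ 1) (W : Matrix (Fin n) (Fin n) ℝ) :
    (∃ P Q : Matrix (Fin n) (Fin n) ℝ,
      P.IsSymm ∧ P.PosDef ∧ Q.IsDiag ∧ Q.PosDef ∧
      (-(fromBlocks ((-(2 * (1 - c))) • P) (P + Wᵀ * Q) (P + Q * W)
        ((-2 : ℝ) • Q))).PosSemidef) ↔
    (∃ (S V : Matrix (Fin n) (Fin n) ℝ) (d : Fin n → ℝ),
      ((1 : Matrix (Fin n) (Fin n) ℝ) - Sᵀ * S).PosSemidef ∧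
      IsUnit V.det ∧
      W = (2 * Real.sqrt (1 - c)) •
            (Matrix.diagonal (fun i => Real.exp (d i)) * S * (Vᵀ * V)) -
          Matrix.diagonal (fun i => Real.exp (2 * d i)) * (Vᵀ * V)^2) := by
  constructor
  · rintro ⟨P, Q, -, hP, hQ, hQpos, hLMI⟩
    obtain ⟨d, rfl⟩ := hQ.exists_eq_diagonal_exp hQpos
    obtain ⟨V, hV, rfl⟩ := hP.exists_eq_sq_conjTranspose_mul_self
    rw [conjTranspose_eq_transpose_of_trivial] at hLMI
    obtain ⟨S, hS, hW⟩ := (posSemidef_firingRateLMI_iff_exists_contraction hc1 W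
      (by simp) (by simpa using hV.star.mul hV) d).1 hLMI
    exact ⟨S, V, d, hS, (isUnit_iff_isUnit_det V).1 hV, hW⟩
  · rintro ⟨S, V, d, hS, hV, hW⟩
    rw [← isUnit_iff_isUnit_det] at hV
    refine ⟨(Vᵀ * V) ^ 2, diagonal fun i => exp (-2 * d i), ?_, ?_, isDiag_diagonal _,
      posDef_diagonal_iff.2 fun i => exp_pos _, ?_⟩
    · simp [IsSymm, sq]
    · simpa using posDef_sq_conjTranspose_mul_self hV
    · exact (posSemidef_firingRateLMI_iff_exists_contraction hc1 W (by simp)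
        (by simpa using hV.star.mul hV) d).2 ⟨S, hS, hW⟩

/-- Exact unconstrained parameterization of the continuous-time firing-rate MONE
certificate: `W` admits certificate data `(P, Q)` with rate `c` iff
`W = 2√(1−c)·diag(e^d)·S·(VᵀV) − diag(e^{2d})·(VᵀV)²` for some contraction `S`,
invertible `V` and `d ∈ ℝⁿ`. -/
theorem frnn_mone_parameterization
    {n : ℕ} (c : ℝ) (hc0 : 0 ≤ c) (hc1 : c ≤ 1) (W : Matrix (Fin n) (Fin n) ℝ) :
    (∃ P Q : Matrix (Fin n) (Fin n) ℝ,
      P.IsSymm ∧ P.PosDef ∧ Q.IsDiag ∧ Q.PosDef ∧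
      (-(fromBlocks ((-(2 * (1 - c))) • P) (P + Wᵀ * Q) (P + Q * W)
        ((-2 : ℝ) • Q))).PosSemidef) ↔
    (∃ (S V : Matrix (Fin n) (Fin n) ℝ) (d : Fin n → ℝ),
      ((1 : Matrix (Fin n) (Fin n) ℝ) - Sᵀ * S).PosSemidef ∧
      IsUnit V.det ∧
      W = (2 * Real.sqrt (1 - c)) •
            (Matrix.diagonal (fun i => Real.exp (d i)) * S * (Vᵀ * V)) -
          Matrix.diagonal (fun i => Real.exp (2 * d i)) * (Vᵀ * V)^2) :=
  frnn_mone_parameterization_general c hc1 W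
end
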